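/- For positive integers $c$ and integers $m,n,k$, define $\Xi_k(m,n;c)=\sum_{x,y \bmod c,\ xy\equiv k \bmod c} e((mx+ny)/c)$. Then $\Xi_k(m,n;c)=\sum_{d\mid(m,n,c)} d\, S(mn/d^2, k; c/d)$. -/

import Mathlib

open Finset

noncomputable def e (c : ℕ) (x : ℤ) : ℂ := Complex.exp (2 * Real.pi * Complex.I * x / c)

noncomputable def Kl (m n : ℤ) (c : ℕ) : ℂ :=
  ∑ a ∈ (Finset.range c).filter (fun a => Nat.Coprime a c),
    e c (m * a + n * (((a : ZMod c)⁻¹).val : ℤ))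

noncomputable def Xi (k m n : ℤ) (c : ℕ) : ℂ :=
  ∑ x ∈ Finset.range c, ∑ y ∈ Finset.range c,
    if ((x : ℤ) * y) % c = k % c then e c (m * x + n * y) else 0

/-! Detecting `x y ≡ k (mod c)` with additive characters and summing over `y` turns `Ξ` into
a sum of `e((m x + t k)/c)` over the pairs `t, x mod c` with `t x ≡ n (mod c)`. Group the `t`
by `d = gcd(t, c)`, writing `t = d s` with `s` a unit mod `q = c/d`. The congruence
`d s x ≡ n (mod d q)` is solvable only if `d ∣ n`, and then it says `x ≡ (n/d) s̄ (mod q)`;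
summing `e(m x/c)` over the `d` lifts of this class gives `0` unless `d ∣ m`, and
`d e((m/d)(n/d) s̄/q)` if it does. The remaining sum over `s`, `∑ e((k s + (mn/d²) s̄)/q)`,
is the Kloosterman sum `S(mn/d², k; q)`. -/

lemma e_eq_zpow (c : ℕ) (x : ℤ) : e c x = Complex.exp (2 * Real.pi * Complex.I / c) ^ x := by
  rw [e, ← Complex.exp_int_mul]
  ring_nf

lemma e_add (c : ℕ) (a b : ℤ) : e c (a + b) = e c a * e c b := by
  simp only [e_eq_zpow, zpow_add₀ (Complex.exp_ne_zero _)]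

lemma e_eq_one_iff {c : ℕ} (hc : c ≠ 0) (u : ℤ) : e c u = 1 ↔ (c : ℤ) ∣ u := by
  rw [e_eq_zpow]
  exact (Complex.isPrimitiveRoot_exp c hc).zpow_eq_one_iff_dvd u

lemma e_congr {c : ℕ} (hc : c ≠ 0) {a b : ℤ} (h : a ≡ b [ZMOD c]) : e c a = e c b := by
  rw [show b = a + (b - a) by ring, e_add, (e_eq_one_iff hc _).2 h.dvd, mul_one]

lemma e_mul_mul_left {d : ℕ} (hd : d ≠ 0) (q : ℕ) (z : ℤ) : e (d * q) (d * z) = e q z := by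
  have hd' : (d : ℂ) ≠ 0 := Nat.cast_ne_zero.2 hd
  rw [e, e]
  push_cast
  rw [show 2 * (Real.pi : ℂ) * Complex.I * (d * z) = d * (2 * Real.pi * Complex.I * z) by ring,
    mul_div_mul_left _ _ hd']

lemma sum_range_e_mul {c : ℕ} (hc : c ≠ 0) (u : ℤ) :
    ∑ t ∈ range c, e c (t * u) = if (c : ℤ) ∣ u then (c : ℂ) else 0 := by
  have hpow : ∀ t : ℕ, e c (t * u) = e c u ^ t := fun t => by
    rw [e_eq_zpow, e_eq_zpow, ← zpow_natCast, ← zpow_mul, mul_comm u]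
  simp_rw [hpow]
  split_ifs with h
  · simp [(e_eq_one_iff hc u).2 h]
  · rw [geom_sum_eq (mt (e_eq_one_iff hc u).1 h), ← hpow,
      (e_eq_one_iff hc _).2 (dvd_mul_right _ _), sub_self, zero_div]

lemma Xi_eq_sum_ite_dvd_sub_mul {c : ℕ} (hc : c ≠ 0) (k m n : ℤ) :
    Xi k m n c = ∑ t ∈ range c, ∑ x ∈ range c,
      if (c : ℤ) ∣ n - t * x then e c (m * x + t * k) else 0 := by
  have hcond : ∀ x y : ℕ, (x : ℤ) * y % c = k % c ↔ (c : ℤ) ∣ k - x * y :=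
    fun _ _ => Int.modEq_iff_dvd
  apply mul_left_cancel₀ (Nat.cast_ne_zero.2 hc : (c : ℂ) ≠ 0)
  calc (c : ℂ) * Xi k m n c
      = ∑ x ∈ range c, ∑ y ∈ range c, ∑ t ∈ range c,
          e c (t * (k - x * y)) * e c (m * x + n * y) := by
        simp_rw [Xi, hcond, mul_sum, ← sum_mul, sum_range_e_mul hc, mul_ite, ite_mul, mul_zero,
          zero_mul]
    _ = ∑ t ∈ range c, ∑ x ∈ range c, ∑ y ∈ range c,
          e c (m * x + t * k) * e c (y * (n - t * x)) := by
        rw [sum_congr rfl fun x _ => sum_comm, sum_comm]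
        refine sum_congr rfl fun t _ => sum_congr rfl fun x _ => sum_congr rfl fun y _ => ?_
        rw [← e_add, ← e_add]
        ring_nf
    _ = _ := by
        simp_rw [← mul_sum, sum_range_e_mul hc, mul_sum, mul_ite, mul_zero, mul_comm]

lemma sum_range_eq_sum_divisors_sum_coprime {M : Type*} [AddCommMonoid M] {c : ℕ} (hc : c ≠ 0)
    (F : ℕ → M) :
    ∑ t ∈ range c, F t =
      ∑ d ∈ c.divisors, ∑ s ∈ (range (c / d)).filter (·.Coprime (c / d)), F (d * s) := by
  rw [sum_sigma']
  refine sum_nbij' (fun t => ⟨t.gcd c, t / t.gcd c⟩) (fun p => p.1 * p.2) ?_ ?_ ?_ ?_ ?_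
  · intro t ht
    have hg : 0 < t.gcd c := Nat.gcd_pos_of_pos_right _ (Nat.pos_of_ne_zero hc)
    simp only [mem_range, mem_sigma, mem_filter, Nat.mem_divisors] at ht ⊢
    exact ⟨⟨Nat.gcd_dvd_right t c, hc⟩,
      Nat.div_lt_div_of_lt_of_dvd (Nat.gcd_dvd_right t c) ht, Nat.coprime_div_gcd_div_gcd hg⟩
  · rintro ⟨d, s⟩ hp
    simp only [mem_range, mem_sigma, mem_filter, Nat.mem_divisors] at hp ⊢
    obtain ⟨⟨hd, -⟩, hs, -⟩ := hp
    calc d * s < d * (c / d) :=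
          Nat.mul_lt_mul_of_pos_left hs (Nat.pos_of_dvd_of_pos hd (Nat.pos_of_ne_zero hc))
      _ = c := Nat.mul_div_cancel' hd
  · intro t _
    exact Nat.mul_div_cancel' (Nat.gcd_dvd_left t c)
  · rintro ⟨d, s⟩ hp
    simp only [mem_range, mem_sigma, mem_filter, Nat.mem_divisors] at hp
    obtain ⟨⟨hd, -⟩, -, hcop⟩ := hp
    have hdpos : 0 < d := Nat.pos_of_dvd_of_pos hd (Nat.pos_of_ne_zero hc)
    have hg : (d * s).gcd c = d := by
      conv_lhs => rw [← Nat.mul_div_cancel' hd]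
      rw [Nat.gcd_mul_left, hcop.gcd_eq_one, mul_one]
    simp [hg, Nat.mul_div_cancel_left _ hdpos]
  · intro t _
    simp only [Nat.mul_div_cancel' (Nat.gcd_dvd_left t c)]

lemma sum_range_mul {M : Type*} [AddCommMonoid M] (q d : ℕ) (f : ℕ → M) :
    ∑ x ∈ range (d * q), f x = ∑ r ∈ range q, ∑ j ∈ range d, f (r + q * j) := by
  induction d with
  | zero => simp
  | succ d ih =>
    simp_rw [sum_range_succ, sum_add_distrib, ← ih, add_mul, one_mul, sum_range_add, add_comm,
      mul_comm q d]

lemma sum_range_ite_dvd_sub_mul {M : Type*} [AddCommMonoid M] {q : ℕ} [NeZero q] {s : ℕ}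
    (hs : s.Coprime q) (n : ℤ) {f : ℤ → M} (hf : ∀ a b, a ≡ b [ZMOD q] → f a = f b) :
    ∑ r ∈ range q, (if (q : ℤ) ∣ n - s * r then f r else 0) = f (n * ((s : ZMod q)⁻¹).val) := by
  set r₀ := ((n : ZMod q) * (s : ZMod q)⁻¹).val with hr₀
  have hsol : ∀ r ∈ range q, (q : ℤ) ∣ n - s * r ↔ r = r₀ := by
    intro r hr
    rw [← ZMod.intCast_eq_intCast_iff_dvd_sub]
    push_cast
    constructor
    · intro h
      rw [← ZMod.val_cast_of_lt (mem_range.1 hr), hr₀, ← h, mul_right_comm,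
        ZMod.coe_mul_inv_eq_one s hs, one_mul]
    · rintro rfl
      rw [ZMod.natCast_zmod_val, mul_left_comm, ZMod.coe_mul_inv_eq_one s hs, mul_one]
  rw [sum_congr rfl fun r hr => if_congr (hsol r hr) rfl rfl, sum_ite_eq' _ r₀,
    if_pos (mem_range.2 (ZMod.val_lt _))]
  apply hf
  rw [← ZMod.intCast_eq_intCast_iff]
  push_cast
  simp only [hr₀, ZMod.natCast_val, ZMod.cast_id', id_eq]

lemma sum_range_mul_ite_e_of_periodic {d q : ℕ} (hd : d ≠ 0) (hq : q ≠ 0) (P : ℕ → Prop)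
    [DecidablePred P] (hP : ∀ r j, P (r + q * j) ↔ P r) (m : ℤ) :
    ∑ x ∈ range (d * q), (if P x then e (d * q) (m * x) else 0) =
      if (d : ℤ) ∣ m then d * ∑ r ∈ range q, (if P r then e q (m / d * r) else 0) else 0 := by
  have hsplit : ∀ r j : ℕ, (if P (r + q * j) then e (d * q) (m * (r + q * j : ℕ)) else 0) =
      (if P r then e (d * q) (m * r) else 0) * e d (j * m) := fun r j => by
    simp only [hP, ite_zero_mul]
    push_cast
    rw [show m * (r + q * j) = m * r + q * (j * m) by ring, e_add, mul_comm d q,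
      e_mul_mul_left hq]
  simp_rw [sum_range_mul, hsplit, ← mul_sum, ← sum_mul, sum_range_e_mul hd, mul_ite, mul_zero]
  split_ifs with hm
  · obtain ⟨m', rfl⟩ := hm
    simp_rw [mul_comm _ (d : ℂ), mul_assoc, e_mul_mul_left hd,
      Int.mul_ediv_cancel_left _ (Int.natCast_ne_zero.2 hd)]
  · rfl

lemma sum_range_ite_dvd_sub_mul_e {d q : ℕ} [NeZero q] (hd : d ≠ 0) {s : ℕ} (hs : s.Coprime q)
    (m n : ℤ) :
    ∑ x ∈ range (d * q),
        (if ((d * q : ℕ) : ℤ) ∣ n - (d * s : ℕ) * x then e (d * q) (m * x) else 0) =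
      if (d : ℤ) ∣ m ∧ (d : ℤ) ∣ n then d * e q (m / d * (n / d) * ((s : ZMod q)⁻¹).val)
      else 0 := by
  have hd' : (d : ℤ) ≠ 0 := Int.natCast_ne_zero.2 hd
  by_cases hn : (d : ℤ) ∣ n
  · obtain ⟨n', rfl⟩ := hn
    have hcond : ∀ x : ℕ,
        ((d * q : ℕ) : ℤ) ∣ d * n' - (d * s : ℕ) * x ↔ (q : ℤ) ∣ n' - s * x := by
      intro x
      push_cast
      rw [show (d : ℤ) * n' - d * s * x = d * (n' - s * x) by ring]
      exact mul_dvd_mul_iff_left hd'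
    have hperiodic : ∀ r j : ℕ, (q : ℤ) ∣ n' - s * (r + q * j : ℕ) ↔ (q : ℤ) ∣ n' - s * r := by
      intro r j
      push_cast
      rw [show n' - s * (r + q * j) = n' - s * r + q * (-(s * j)) by ring,
        dvd_add_left (dvd_mul_right _ _)]
    simp_rw [hcond]
    rw [sum_range_mul_ite_e_of_periodic hd (NeZero.ne q) _ hperiodic,
      sum_range_ite_dvd_sub_mul hs n' fun a b h => e_congr (NeZero.ne q) (h.mul_left _),
      Int.mul_ediv_cancel_left _ hd', mul_assoc]
    simp only [dvd_mul_right, and_true]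
  · rw [if_neg fun h => hn h.2]
    refine sum_eq_zero fun x _ => if_neg fun h => hn ?_
    have hdn : (d : ℤ) ∣ n - (d * s : ℕ) * x := (Dvd.intro (q : ℤ) (by push_cast; ring)).trans h
    have hds : (d : ℤ) ∣ (d * s : ℕ) * x := Dvd.intro ((s : ℤ) * x) (by push_cast; ring)
    simpa using hdn.add hds

lemma coprime_val_inv_natCast {q a : ℕ} (h : a.Coprime q) : ((a : ZMod q)⁻¹).val.Coprime q := by
  have := ZMod.val_coe_unit_coprime (ZMod.unitOfCoprime a h)⁻¹
  rwa [← ZMod.inv_coe_unit, ZMod.coe_unitOfCoprime] at this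

lemma inv_inv_natCast_of_coprime {q a : ℕ} (h : a.Coprime q) : ((a : ZMod q)⁻¹)⁻¹ = a := by
  rw [← ZMod.coe_unitOfCoprime a h, ZMod.inv_coe_unit, ZMod.inv_coe_unit, inv_inv]

lemma Kl_comm (m n : ℤ) (q : ℕ) : Kl m n q = Kl n m q := by
  rcases eq_or_ne q 0 with rfl | hq
  · simp [Kl]
  have : NeZero q := ⟨hq⟩
  have hmem : ∀ a ∈ (range q).filter (·.Coprime q),
      ((a : ZMod q)⁻¹).val ∈ (range q).filter (·.Coprime q) := fun a ha =>
    mem_filter.2 ⟨mem_range.2 (ZMod.val_lt _), coprime_val_inv_natCast (mem_filter.1 ha).2⟩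
  have hinv : ∀ a ∈ (range q).filter (·.Coprime q),
      ((((a : ZMod q)⁻¹).val : ZMod q)⁻¹).val = a := fun a ha => by
    obtain ⟨ha, hcop⟩ := mem_filter.1 ha
    rw [ZMod.natCast_zmod_val, inv_inv_natCast_of_coprime hcop,
      ZMod.val_cast_of_lt (mem_range.1 ha)]
  refine sum_nbij' _ _ hmem hmem hinv hinv fun a ha => ?_
  rw [hinv a ha, add_comm]

lemma sum_coprime_sum_ite_dvd_eq_Kl {d q : ℕ} (hd : d ≠ 0) (hq : q ≠ 0) (k m n : ℤ) :
    ∑ s ∈ (range q).filter (·.Coprime q), ∑ x ∈ range (d * q),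
      (if ((d * q : ℕ) : ℤ) ∣ n - (d * s : ℕ) * x then e (d * q) (m * x + (d * s : ℕ) * k) else 0) =
      if (d : ℤ) ∣ m ∧ (d : ℤ) ∣ n then d * Kl (m / d * (n / d)) k q else 0 := by
  have : NeZero q := ⟨hq⟩
  have hfactor : ∀ s x : ℕ,
      e (d * q) (m * x + (d * s : ℕ) * k) = e (d * q) (m * x) * e q (s * k) := by
    intro s x
    push_cast
    rw [e_add, mul_assoc, e_mul_mul_left hd]
  simp_rw [hfactor, ← ite_zero_mul, ← sum_mul]
  rw [sum_congr rfl fun s hs => by rw [sum_range_ite_dvd_sub_mul_e hd (mem_filter.1 hs).2]]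
  split_ifs
  · rw [Kl_comm, Kl, mul_sum]
    refine sum_congr rfl fun s _ => ?_
    rw [mul_assoc, ← e_add, add_comm, mul_comm (s : ℤ) k]
  · simp

lemma divisors_gcd_gcd_eq_filter {c : ℕ} (hc : c ≠ 0) (m n : ℤ) :
    (Int.gcd m (Int.gcd n c)).divisors =
      c.divisors.filter fun d : ℕ => (d : ℤ) ∣ m ∧ (d : ℤ) ∣ n := by
  have hg : Int.gcd m (Int.gcd n c) ≠ 0 := by simp [Int.gcd_eq_zero_iff, hc]
  ext d
  simp only [Nat.mem_divisors, mem_filter, Int.dvd_gcd_iff, Int.dvd_coe_gcd_iff,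
    Int.natCast_dvd_natCast]
  tauto

theorem xi_selberg (c : ℕ) (hc : 0 < c) (m n k : ℤ) :
    Xi k m n c = ∑ d ∈ (Int.gcd m (Int.gcd n c)).divisors,
      (d : ℂ) * Kl (m * n / (d : ℤ) ^ 2) k (c / d) := by
  rw [Xi_eq_sum_ite_dvd_sub_mul hc.ne', sum_range_eq_sum_divisors_sum_coprime hc.ne',
    divisors_gcd_gcd_eq_filter hc.ne', sum_filter]
  refine sum_congr rfl fun d hd => ?_
  obtain ⟨⟨q, rfl⟩, -⟩ := Nat.mem_divisors.1 hd
  have hd0 : d ≠ 0 := left_ne_zero_of_mul hc.ne'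
  rw [Nat.mul_div_cancel_left q (Nat.pos_of_ne_zero hd0),
    sum_coprime_sum_ite_dvd_eq_Kl hd0 (right_ne_zero_of_mul hc.ne')]
  split_ifs with h
  · rw [sq, EuclideanDomain.mul_div_mul_comm_of_dvd_dvd h.1 h.2]
  · rfl
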